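/- Let G be a discrete inverse semigroup. If the associated groupoid (G * X)/≡ is Hausdorff, then G is E-continuous; i.e., for every g ∈ G the pointwise supremum ⋁{1_e : e ∈ E, e ≤ g} is a continuous function on X. -/

import Mathlib

/-- An inverse semigroup: a semigroup in which every element `g` has a unique
generalized inverse `star g`. -/
class InverseSemigroup (G : Type*) extends Semigroup G where
  star : G → G
  mul_star_mul : ∀ g : G, g * star g * g = g
  star_mul_star : ∀ g : G, star g * g * star g = star g
  star_unique : ∀ g h : G, g * h * g = g → h * g * h = h → h = star g

open InverseSemigroup

variable (G : Type*) [InverseSemigroup G]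

/-- Idempotents of the inverse semigroup. -/
def IsIdem (e : G) : Prop := e * e = e

/-- The character space `X` of `C*(E)`: nonzero `{0,1}`-valued multiplicative functions
on the semilattice `E` of idempotents, with the topology of pointwise convergence
(the Gelfand topology). A character `x` satisfies `x ∈ e` iff `x e = true`. -/
def SgChar : Type _ :=
  {x : G → Bool // (∀ e f : G, IsIdem G e → IsIdem G f → x (e * f) = (x e && x f)) ∧
    ∃ e : G, IsIdem G e ∧ x e = true}

instance : TopologicalSpace (SgChar G) :=
  TopologicalSpace.induced Subtype.val (by infer_instance : TopologicalSpace (G → Bool))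

/-- The space `G * X = {(g, x) : x ∈ supp (1_{g* g})}`, topologized as a subspace of
`G × X` with `G` discrete. -/
def GX : Type _ := {p : G × SgChar G // p.2.1 (star p.1 * p.1) = true}

instance : TopologicalSpace (GX G) :=
  TopologicalSpace.induced Subtype.val
    (@instTopologicalSpaceProd G (SgChar G) ⊥ inferInstance)

/-- The equivalence `(g, x) ≡ (h, y)` iff `x = y` and `g e = h e` for some idempotent
`e` with `x ∈ e`. -/
def gxRel (p q : GX G) : Prop :=
  p.1.2 = q.1.2 ∧ ∃ e : G, IsIdem G e ∧ p.1.2.1 e = true ∧ p.1.1 * e = q.1.1 * e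

/-- The groupoid associated to the inverse semigroup `G`: the quotient `(G * X)/≡`
with the quotient topology. -/
abbrev Gpd : Type _ := Quot (gxRel G)

/-- `E`-continuity of `G`: for every `g`, the pointwise supremum
`⋁ {1_e : e ∈ E, e ≤ g}` (the indicator of `{x : x e = true for some idempotent e ≤ g}`)
is a continuous function on `X`. -/
def EContinuous : Prop :=
  ∀ g : G, Continuous
    ({x : SgChar G | ∃ e : G, IsIdem G e ∧ e = g * e ∧ x.1 e = true}.indicator
      (fun _ => (1 : ℝ)))

/-!
Fix `g`, and let `U` be the set of characters `x` with `x ∈ e` for some idempotent `e ≤ g`, the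
support of `⋁ {1_e : e ≤ g}`. `U` is open, and it lies in the clopen set `D = {x | x ∈ g* g}`.
For `x ∈ D` the germs `[g, x]` and `[g* g, x]` coincide exactly when `x ∈ U`: an idempotent `e`
with `g e = g* g e` gives the idempotent `g* g e ≤ g`, and `e ≤ g` implies `e ≤ g* g`. Thus `U`
is the equalizer of the two continuous maps `D → (G * X)/≡`, `x ↦ [g, x]` and `x ↦ [g* g, x]`,
which is closed when the groupoid is Hausdorff. So `U` is clopen and its indicator is continuous.
-/

namespace InverseSemigroup

variable {G : Type*} [InverseSemigroup G] {e f : G}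

theorem star_star (g : G) : star (star g) = g :=
  (star_unique (star g) g (star_mul_star g) (mul_star_mul g)).symm

theorem IsIdem.star_eq (he : IsIdem G e) : star e = e := by
  have h : e * e * e = e := by rw [he, he]
  exact (star_unique e e h h).symm

theorem IsIdem.mul_mul (he : IsIdem G e) (y : G) : e * (e * y) = e * y := by
  rw [← mul_assoc, he]

theorem isIdem_star_mul (g : G) : IsIdem G (star g * g) := by
  show star g * g * (star g * g) = star g * g
  rw [← mul_assoc, star_mul_star]

theorem isIdem_mul_star (g : G) : IsIdem G (g * star g) := by
  show g * star g * (g * star g) = g * star g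
  rw [← mul_assoc, mul_star_mul]

theorem IsIdem.mul (he : IsIdem G e) (hf : IsIdem G f) : IsIdem G (e * f) := by
  have h₁ : e * (f * (star (e * f) * (e * f))) = e * f := by
    simpa only [mul_assoc] using mul_star_mul (e * f)
  have h₂ (y : G) : star (e * f) * (e * (f * (star (e * f) * y))) = star (e * f) * y := by
    simpa only [mul_assoc] using congrArg (· * y) (star_mul_star (e * f))
  -- `f (ef)* e` is again an inverse of `ef`, and it is visibly idempotent.
  have hstar : f * (star (e * f) * e) = star (e * f) :=
    star_unique _ _ (by simp only [mul_assoc, he.mul_mul, hf.mul_mul, h₁])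
      (by simp only [mul_assoc, he.mul_mul, hf.mul_mul, h₂])
  have hidem : IsIdem G (star (e * f)) := by
    show star (e * f) * star (e * f) = star (e * f)
    conv_lhs => rw [← hstar]
    simp only [mul_assoc]
    rw [h₂, hstar]
  rw [← star_star (e * f), hidem.star_eq]
  exact hidem

theorem IsIdem.mul_comm (he : IsIdem G e) (hf : IsIdem G f) : e * f = f * e := by
  have hef : e * (f * (e * f)) = e * f := by
    simpa only [IsIdem, mul_assoc] using he.mul hf
  have hfe : f * (e * (f * e)) = f * e := by
    simpa only [IsIdem, mul_assoc] using hf.mul he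
  have : f * e = star (e * f) :=
    star_unique _ _ (by simp only [mul_assoc, he.mul_mul, hf.mul_mul, hef])
      (by simp only [mul_assoc, he.mul_mul, hf.mul_mul, hfe])
  rw [this, (he.mul hf).star_eq]

theorem star_mul (g h : G) : star (g * h) = star h * star g := by
  have hcomm := (isIdem_mul_star h).mul_comm (isIdem_star_mul g)
  refine (star_unique _ _ ?_ ?_).symm
  · calc g * h * (star h * star g) * (g * h) = g * (h * star h * (star g * g)) * h := by
          simp only [mul_assoc]
      _ = g * star g * g * (h * star h * h) := by rw [hcomm]; simp only [mul_assoc]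
      _ = g * h := by rw [mul_star_mul, mul_star_mul]
  · calc star h * star g * (g * h) * (star h * star g)
          = star h * (star g * g * (h * star h)) * star g := by simp only [mul_assoc]
      _ = star h * h * star h * (star g * g * star g) := by rw [← hcomm]; simp only [mul_assoc]
      _ = star h * star g := by rw [star_mul_star, star_mul_star]

theorem IsIdem.star_mul_self_mul_eq {g : G} (he : IsIdem G e) (hge : e = g * e) :
    star g * g * e = e := by
  have hestar : e * star g = e := by
    conv_rhs => rw [← he.star_eq, hge, star_mul, he.star_eq]
  calc star g * g * e = e * (star g * g) * e := by
        rw [← (isIdem_star_mul g).mul_comm he, mul_assoc _ e e, he]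
    _ = e * star g * (g * e) := by simp only [mul_assoc]
    _ = e := by rw [hestar, ← hge, he]

end InverseSemigroup

open InverseSemigroup

theorem gxRel_equivalence {G : Type*} [InverseSemigroup G] : Equivalence (gxRel G) where
  refl p := by
    obtain ⟨e, he, hxe⟩ := p.1.2.2.2
    exact ⟨rfl, e, he, hxe, rfl⟩
  symm := fun ⟨hx, e, he, hxe, hge⟩ => ⟨hx.symm, e, he, hx ▸ hxe, hge.symm⟩
  trans := by
    intro p q r ⟨hpq, e, he, hxe, hge⟩ ⟨hqr, f, hf, hxf, hgf⟩
    refine ⟨hpq.trans hqr, e * f, he.mul hf, ?_, ?_⟩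
    · rw [p.1.2.2.1 e f he hf, hxe, hpq, hxf]
      rfl
    · calc p.1.1 * (e * f) = q.1.1 * e * f := by rw [← mul_assoc, hge]
        _ = r.1.1 * f * e := by rw [mul_assoc, he.mul_comm hf, ← mul_assoc, hgf]
        _ = r.1.1 * (e * f) := by rw [mul_assoc, hf.mul_comm he]

theorem Gpd.mk_eq_mk_iff {G : Type*} [InverseSemigroup G] {p q : GX G} :
    Quot.mk (gxRel G) p = Quot.mk (gxRel G) q ↔ gxRel G p q :=
  Quot.eq.trans gxRel_equivalence.eqvGen_iff

namespace SgChar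

variable {G : Type*} [InverseSemigroup G]

theorem continuous_apply (e : G) : Continuous fun x : SgChar G => x.1 e :=
  (_root_.continuous_apply e).comp continuous_induced_dom

theorem isClopen_setOf_apply (e : G) : IsClopen {x : SgChar G | x.1 e = true} :=
  (isClopen_discrete {true}).preimage (continuous_apply e)

/-- The domain `D_{g* g}` of the germs `[g, x]`. -/
def dom (g : G) : Set (SgChar G) := {x | x.1 (star g * g) = true}

theorem dom_star_mul_self (g : G) : dom (star g * g) = dom g := by
  have hidem : star g * g * (star g * g) = star g * g := isIdem_star_mul g
  simp only [dom, (isIdem_star_mul g).star_eq, hidem]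

/-- The support of `⋁ {1_e : e ∈ E, e ≤ g}`. -/
def supportBelow (g : G) : Set (SgChar G) :=
  {x | ∃ e : G, IsIdem G e ∧ e = g * e ∧ x.1 e = true}

theorem isOpen_supportBelow (g : G) : IsOpen (supportBelow g) :=
  isOpen_iff_forall_mem_open.mpr fun _ ⟨e, he, hge, hxe⟩ =>
    ⟨{y | y.1 e = true}, fun _ hy => ⟨e, he, hge, hy⟩, (isClopen_setOf_apply e).isOpen, hxe⟩

theorem supportBelow_subset_dom (g : G) : supportBelow g ⊆ dom g := by
  rintro x ⟨e, he, hge, hxe⟩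
  have := x.2.1 _ e (isIdem_star_mul g) he
  rw [he.star_mul_self_mul_eq hge, hxe, Bool.and_true] at this
  exact this.symm

end SgChar

namespace Gpd

open SgChar

variable {G : Type*} [InverseSemigroup G]

/-- The germ `[g, x]`. -/
def germ (g : G) (x : dom g) : Gpd G := Quot.mk _ ⟨(g, x.1), x.2⟩

theorem continuous_germ (g : G) : Continuous (germ g) := by
  let : TopologicalSpace G := ⊥
  exact continuous_quot_mk.comp <| continuous_induced_rng.2 <|
    continuous_const.prodMk continuous_subtype_val

theorem germ_eq_germ_star_mul_self_iff (g : G) (x : dom g) :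
    germ g x = germ (star g * g) (Set.inclusion (dom_star_mul_self g).ge x) ↔
      x.1 ∈ supportBelow g := by
  refine mk_eq_mk_iff.trans ⟨?_, ?_⟩
  · rintro ⟨-, e, he, hxe, hge⟩
    refine ⟨star g * g * e, (isIdem_star_mul g).mul he, ?_, ?_⟩
    · rw [← mul_assoc, ← mul_assoc, mul_star_mul, hge]
    · rw [x.1.2.1 _ e (isIdem_star_mul g) he, x.2, hxe]
      rfl
  · rintro ⟨e, he, hge, hxe⟩
    exact ⟨rfl, e, he, hxe, by rw [← hge, he.star_mul_self_mul_eq hge]⟩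

end Gpd

open SgChar Gpd

theorem isClosed_supportBelow {G : Type*} [InverseSemigroup G] [T2Space (Gpd G)] (g : G) :
    IsClosed (supportBelow g) := by
  have hclosed : IsClosed ((↑) ⁻¹' supportBelow g : Set (dom g)) := by
    simpa only [Set.preimage, Function.comp_apply, ← germ_eq_germ_star_mul_self_iff] using
      isClosed_eq (continuous_germ g) ((continuous_germ _).comp (continuous_inclusion _))
  have himage := hclosed.trans (isClopen_setOf_apply _).isClosed
  rwa [Subtype.image_preimage_coe, Set.inter_eq_right.mpr (supportBelow_subset_dom g)] at himage

/-- If the groupoid `(G * X)/≡` associated to a discrete inverse semigroup `G` is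
Hausdorff, then `G` is `E`-continuous. -/
theorem stmt16 {G : Type*} [InverseSemigroup G] (h : T2Space (Gpd G)) :
    EContinuous G := fun g =>
  IsClopen.continuous_indicator ⟨isClosed_supportBelow g, isOpen_supportBelow g⟩ continuous_const
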